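/- arXiv:2411.15670 — 5 statements merged into one kernel-verified Lean document; each statement's English description precedes it below -/
import Mathlib

section
/- Let n ≥ 1 and p ≥ 1 be integers and set m = min{n, p−1}. Let a ∈ ℂ^p be nonzero and let ξ₁, …, ξₙ ∈ ℂ^p. Define, for 1 ≤ k, l ≤ n, H_{kl} := ⟨ξ_k, ξ_l⟩/‖a‖² − ⟨ξ_k, a⟩⟨a, ξ_l⟩/‖a‖⁴, and, for 1 ≤ j ≤ p and 1 ≤ k ≤ n, c_{jk} := ξ_k(j)/‖a‖² − a_j⟨ξ_k, a⟩/‖a‖⁴, where ⟨x, y⟩ = Σ_{i=1}^p x_i · conj(y_i) is the standard Hermitian inner product on ℂ^p and ‖a‖² = ⟨a,a⟩. Then for every matrix v = (v_{jk}) ∈ ℂ^{p×n} one has m · Σ_{j=1}^p Σ_{k,l=1}^n H_{kl} v_{jk} conj(v_{jl}) ≥ ‖a‖² · |Σ_{j=1}^p Σ_{k=1}^n c_{jk} v_{jk}|². -/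
/-!
Let `P` be the orthogonal projection onto `a^⊥` and `b k = P (ξ k)`. Then `‖a‖² H k l = ⟨b k, b l⟩`
and `‖a‖² c j k = b k j`, so with `w j = ∑ k, v j k • b k` the inequality becomes
`|∑ j, w j j|² ≤ m ∑ j, ‖w j‖²`. All `w j` lie in `V = span (b k)`, a subspace of `a^⊥` of
dimension `d ≤ m`. Writing `w j j = ⟨P_V e j, w j⟩`, Cauchy–Schwarz bounds `|∑ j, w j j|²` by
`(∑ j, ‖P_V e j‖²) ∑ j, ‖w j‖²`, and `∑ j, ‖P_V e j‖² = tr P_V = d`.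
-/

open Finset Complex Module
open scoped InnerProductSpace

section
variable {𝕜 E ι : Type*} [RCLike 𝕜] [NormedAddCommGroup E] [InnerProductSpace 𝕜 E] [Fintype ι]

lemma norm_sum_inner_sq_le (x y : ι → E) :
    ‖∑ i, ⟪x i, y i⟫_𝕜‖ ^ 2 ≤ (∑ i, ‖x i‖ ^ 2) * ∑ i, ‖y i‖ ^ 2 :=
  calc ‖∑ i, ⟪x i, y i⟫_𝕜‖ ^ 2 ≤ (∑ i, ‖x i‖ * ‖y i‖) ^ 2 := by
        gcongr
        exact (norm_sum_le _ _).trans (sum_le_sum fun i _ => norm_inner_le_norm _ _)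
    _ ≤ _ := sum_mul_sq_le_sq_mul_sq _ _ _

lemma inner_starProjection_orthogonal_span_singleton (a x y : E) :
    ⟪x, (𝕜 ∙ a)ᗮ.starProjection y⟫_𝕜 = ⟪x, y⟫_𝕜 - ⟪x, a⟫_𝕜 * ⟪a, y⟫_𝕜 / (‖a‖ : 𝕜) ^ 2 := by
  simp only [Submodule.starProjection_orthogonal, sub_apply, ContinuousLinearMap.coe_id', id_eq,
    Submodule.starProjection_singleton, inner_sub_right, inner_smul_right]
  push_cast
  ring

variable [FiniteDimensional 𝕜 E]

lemma finrank_orthogonal_span_singleton_eq_sub_one {a : E} (ha : a ≠ 0) :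
    finrank 𝕜 (𝕜 ∙ a)ᗮ = finrank 𝕜 E - 1 := by
  have := (𝕜 ∙ a).finrank_add_finrank_orthogonal
  rw [finrank_span_singleton ha] at this
  omega

namespace OrthonormalBasis

lemma sum_norm_sq_starProjection (e : OrthonormalBasis ι 𝕜 E) (V : Submodule 𝕜 E) :
    ∑ i, ‖V.starProjection (e i)‖ ^ 2 = finrank 𝕜 V := by
  let f := stdOrthonormalBasis 𝕜 V
  calc ∑ i, ‖V.starProjection (e i)‖ ^ 2
      = ∑ i, ∑ t, ‖⟪(f t : E), e i⟫_𝕜‖ ^ 2 := by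
        simp_rw [Submodule.starProjection_apply, Submodule.norm_coe, ← f.sum_sq_norm_inner_right,
          Submodule.inner_orthogonalProjectionOnto_eq_of_mem_left]
    _ = ∑ t, ‖(f t : E)‖ ^ 2 := by
        rw [sum_comm]
        simp_rw [e.sum_sq_norm_inner_left]
    _ = finrank 𝕜 V := by
        simp [Submodule.norm_coe, f.orthonormal.1]

lemma norm_sum_inner_sq_le_finrank_mul (e : OrthonormalBasis ι 𝕜 E) {V : Submodule 𝕜 E}
    {w : ι → E} (hw : ∀ i, w i ∈ V) :
    ‖∑ i, ⟪e i, w i⟫_𝕜‖ ^ 2 ≤ finrank 𝕜 V * ∑ i, ‖w i‖ ^ 2 := by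
  have h_proj : ∀ i, ⟪e i, w i⟫_𝕜 = ⟪V.starProjection (e i), w i⟫_𝕜 := fun i => by
    rw [Submodule.inner_starProjection_left_eq_right,
      Submodule.starProjection_eq_self_iff.mpr (hw i)]
  simp_rw [h_proj, ← e.sum_norm_sq_starProjection V]
  exact norm_sum_inner_sq_le _ _

lemma norm_sum_inner_mul_sq_le_min_mul {κ : Type*} [Fintype κ] (e : OrthonormalBasis ι 𝕜 E)
    {W : Submodule 𝕜 E} {β : κ → E} (hβ : ∀ k, β k ∈ W) (v : ι → κ → 𝕜) :
    ‖∑ j, ∑ k, ⟪e j, β k⟫_𝕜 * v j k‖ ^ 2 ≤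
      (min (Fintype.card κ) (finrank 𝕜 W) : ℕ) *
        RCLike.re (∑ j, ∑ k, ∑ l, ⟪β l, β k⟫_𝕜 * v j k * starRingEnd 𝕜 (v j l)) := by
  let V := Submodule.span 𝕜 (Set.range β)
  let w : ι → E := fun j => ∑ k, v j k • β k
  have hw : ∀ j, w j ∈ V := fun j =>
    Submodule.sum_mem _ fun k _ => Submodule.smul_mem _ _ (Submodule.subset_span ⟨k, rfl⟩)
  have hV : finrank 𝕜 V ≤ min (Fintype.card κ) (finrank 𝕜 W) :=
    le_min (finrank_range_le_card β)
      (Submodule.finrank_mono (Submodule.span_le.mpr (Set.range_subset_iff.mpr hβ)))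
  have h_lin : ∀ j, ∑ k, ⟪e j, β k⟫_𝕜 * v j k = ⟪e j, w j⟫_𝕜 := fun j => by
    simp only [w, inner_sum, inner_smul_right, mul_comm]
  have h_quad : ∀ j, ∑ k, ∑ l, ⟪β l, β k⟫_𝕜 * v j k * starRingEnd 𝕜 (v j l) =
      ((‖w j‖ ^ 2 : ℝ) : 𝕜) := fun j => by
    rw [RCLike.ofReal_pow, ← inner_self_eq_norm_sq_to_K]
    simp only [w, sum_inner, inner_sum, inner_smul_left, inner_smul_right, mul_sum]
    exact sum_congr rfl fun k _ => sum_congr rfl fun l _ => by ring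
  simp_rw [h_lin, h_quad, ← RCLike.ofReal_sum, RCLike.ofReal_re]
  calc ‖∑ j, ⟪e j, w j⟫_𝕜‖ ^ 2 ≤ finrank 𝕜 V * ∑ j, ‖w j‖ ^ 2 :=
        e.norm_sum_inner_sq_le_finrank_mul hw
    _ ≤ _ := by gcongr

end OrthonormalBasis

end

theorem skoda_basic_inequality_pointwise_general
    (n p : ℕ)
    (a : Fin p → ℂ) (ha : a ≠ 0) (ξ : Fin n → Fin p → ℂ) (v : Fin p → Fin n → ℂ) :
    let conj : ℂ → ℂ := starRingEnd ℂ
    let ip : (Fin p → ℂ) → (Fin p → ℂ) → ℂ := fun x y => ∑ i, x i * conj (y i)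
    let q : ℂ := ip a a
    let H : Fin n → Fin n → ℂ :=
      fun k l => ip (ξ k) (ξ l) / q - ip (ξ k) a * ip a (ξ l) / q ^ 2
    let c : Fin p → Fin n → ℂ :=
      fun j k => ξ k j / q - a j * ip (ξ k) a / q ^ 2
    let m : ℕ := min n (p - 1)
    q.re * ‖∑ j, ∑ k, c j k * v j k‖ ^ 2 ≤
      (m : ℝ) * (∑ j, ∑ k, ∑ l, H k l * v j k * conj (v j l)).re := by
  intro conj ip q H c m
  let A : EuclideanSpace ℂ (Fin p) := WithLp.toLp 2 a
  let X : Fin n → EuclideanSpace ℂ (Fin p) := fun k => WithLp.toLp 2 (ξ k)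
  let P := (ℂ ∙ A)ᗮ.starProjection
  let e := EuclideanSpace.basisFun (Fin p) ℂ
  have hA : A ≠ 0 := fun h => ha (congrArg WithLp.ofLp h)
  have hq : q = ⟪A, A⟫_ℂ := rfl
  have hH : ∀ k l, H k l = ⟪P (X l), P (X k)⟫_ℂ / q := fun k l => by
    rw [Submodule.inner_starProjection_left_eq_right,
      Submodule.starProjection_eq_self_iff.mpr (Submodule.starProjection_apply_mem _ _),
      inner_starProjection_orthogonal_span_singleton, ← inner_self_eq_norm_sq_to_K, ← hq]
    change ⟪X l, X k⟫_ℂ / q - ⟪A, X k⟫_ℂ * ⟪X l, A⟫_ℂ / q ^ 2 = _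
    ring
  have hc : ∀ j k, c j k = ⟪e j, P (X k)⟫_ℂ / q := fun j k => by
    rw [inner_starProjection_orthogonal_span_singleton, ← inner_self_eq_norm_sq_to_K, ← hq,
      EuclideanSpace.basisFun_inner, EuclideanSpace.basisFun_inner]
    change ξ k j / q - a j * ⟪A, X k⟫_ℂ / q ^ 2 = _
    ring
  have key := e.norm_sum_inner_mul_sq_le_min_mul (W := (ℂ ∙ A)ᗮ) (β := fun k => P (X k))
    (fun k => Submodule.starProjection_apply_mem _ _) v
  rw [finrank_orthogonal_span_singleton_eq_sub_one hA, finrank_euclideanSpace_fin,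
    Fintype.card_fin] at key
  have hr : 0 < ‖A‖ ^ 2 := by positivity
  have hq_real : q = ((‖A‖ ^ 2 : ℝ) : ℂ) := by
    rw [hq, inner_self_eq_norm_sq_to_K, Complex.ofReal_pow]
    rfl
  simp_rw [hH, hc, div_mul_eq_mul_div, ← sum_div, hq_real, Complex.ofReal_re,
    Complex.div_ofReal_re, norm_div, Complex.norm_real, Real.norm_of_nonneg hr.le]
  field_simp
  exact key

/-- **Skoda's basic inequality, pointwise form.**
With `⟨x, y⟩ = ∑ i, x i * conj (y i)` the standard Hermitian product on `ℂ^p`,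
`H k l = ⟨ξ k, ξ l⟩/‖a‖² − ⟨ξ k, a⟩⟨a, ξ l⟩/‖a‖⁴` and
`c j k = (ξ k) j/‖a‖² − a j ⟨ξ k, a⟩/‖a‖⁴`, one has
`m ∑_{j,k,l} H k l * v j k * conj (v j l) ≥ ‖a‖² |∑_{j,k} c j k * v j k|²`
where `m = min n (p-1)`. -/
theorem skoda_basic_inequality_pointwise
    (n p : ℕ) (hn : 1 ≤ n) (hp : 1 ≤ p)
    (a : Fin p → ℂ) (ha : a ≠ 0) (ξ : Fin n → Fin p → ℂ) (v : Fin p → Fin n → ℂ) :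
    let conj : ℂ → ℂ := starRingEnd ℂ
    let ip : (Fin p → ℂ) → (Fin p → ℂ) → ℂ := fun x y => ∑ i, x i * conj (y i)
    let q : ℂ := ip a a
    let H : Fin n → Fin n → ℂ :=
      fun k l => ip (ξ k) (ξ l) / q - ip (ξ k) a * ip a (ξ l) / q ^ 2
    let c : Fin p → Fin n → ℂ :=
      fun j k => ξ k j / q - a j * ip (ξ k) a / q ^ 2
    let m : ℕ := min n (p - 1)
    q.re * ‖∑ j, ∑ k, c j k * v j k‖ ^ 2 ≤
      (m : ℝ) * (∑ j, ∑ k, ∑ l, H k l * v j k * conj (v j l)).re :=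
  skoda_basic_inequality_pointwise_general n p a ha ξ v
end

section
/- Let n ≥ 1 and p ≥ 1 be integers and set m = min{n, p−1}. Let a ∈ ℂ^p be nonzero, let ξ₁, …, ξₙ ∈ ℂ^p, and define H_{kl} := ⟨ξ_k, ξ_l⟩/‖a‖² − ⟨ξ_k, a⟩⟨a, ξ_l⟩/‖a‖⁴ and c_{jk} := ξ_k(j)/‖a‖² − a_j⟨ξ_k, a⟩/‖a‖⁴ for 1 ≤ k, l ≤ n and 1 ≤ j ≤ p, where ⟨x, y⟩ = Σ_i x_i · conj(y_i). Let A = (A_{kl}) be an n × n complex Hermitian matrix such that the Hermitian form of A − H is positive semidefinite, i.e. Σ_{k,l} (A_{kl} − H_{kl}) w_k conj(w_l) ≥ 0 for all w ∈ ℂⁿ. Then for every matrix v = (v_{jk}) ∈ ℂ^{p×n} one has ‖a‖² · |Σ_{j=1}^p Σ_{k=1}^n c_{jk} v_{jk}|² ≤ m · Σ_{j=1}^p Σ_{k,l=1}^n A_{kl} v_{jk} conj(v_{jl}). -/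
/-!
The columns `c_k` of `c` are `‖a‖⁻²` times the orthogonal projections of the `ξ_k` onto `a⊥`,
so `H` is `‖a‖²` times their Gram matrix and, with `y_j = ∑_k v_{jk} c_k`, the hypothesis gives
`‖a‖² ∑_j ‖y_j‖² ≤ Re ∑_{j,k,l} A_{kl} v_{jk} conj (v_{jl})`.
The sum `∑_{j,k} c_{jk} v_{jk} = ∑_j ⟪e_j, y_j⟫` is the trace of a matrix whose columns `y_j` lie in
`W = span {c_k} ⊆ a⊥`, a space of dimension at most `m = min n (p - 1)`. Replacing `e_j` by its
projection `P e_j` to `W` and applying Cauchy–Schwarz bounds its square by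
`(∑_j ‖P e_j‖²) (∑_j ‖y_j‖²) = dim W · ∑_j ‖y_j‖²`, since `∑_j ‖P e_j‖² = tr P = dim W`.
-/

open Finset Module
open scoped InnerProductSpace

section TraceBound

variable {𝕜 E ι : Type*} [RCLike 𝕜] [NormedAddCommGroup E] [InnerProductSpace 𝕜 E]
  [FiniteDimensional 𝕜 E] [Fintype ι]

theorem OrthonormalBasis.sum_sq_norm_starProjection (b : OrthonormalBasis ι 𝕜 E)
    (W : Submodule 𝕜 E) : ∑ i, ‖W.starProjection (b i)‖ ^ 2 = finrank 𝕜 W := by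
  have hproj : LinearMap.IsProj W (W.starProjection : E →ₗ[𝕜] E) :=
    ⟨W.starProjection_apply_mem, fun _ => Submodule.starProjection_eq_self_iff.2⟩
  have htrace := hproj.trace
  rw [LinearMap.trace_eq_sum_inner _ b] at htrace
  have hinner : ∀ x, ⟪x, W.starProjection x⟫_𝕜 = (‖W.starProjection x‖ : 𝕜) ^ 2 := fun x => by
    rw [← inner_self_eq_norm_sq_to_K, W.inner_starProjection_left_eq_right,
      Submodule.starProjection_eq_self_iff.2 (W.starProjection_apply_mem x)]
  simp only [ContinuousLinearMap.coe_coe, hinner] at htrace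
  exact_mod_cast htrace

theorem OrthonormalBasis.sq_norm_sum_inner_le (b : OrthonormalBasis ι 𝕜 E)
    (W : Submodule 𝕜 E) {y : ι → E} (hy : ∀ i, y i ∈ W) :
    ‖∑ i, ⟪b i, y i⟫_𝕜‖ ^ 2 ≤ finrank 𝕜 W * ∑ i, ‖y i‖ ^ 2 := by
  have hproj : ∀ i, ⟪b i, y i⟫_𝕜 = ⟪W.starProjection (b i), y i⟫_𝕜 := fun i => by
    rw [W.inner_starProjection_left_eq_right, Submodule.starProjection_eq_self_iff.2 (hy i)]
  calc ‖∑ i, ⟪b i, y i⟫_𝕜‖ ^ 2 ≤ (∑ i, ‖W.starProjection (b i)‖ * ‖y i‖) ^ 2 := by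
        simp_rw [hproj]
        gcongr
        exact (norm_sum_le _ _).trans (sum_le_sum fun i _ => norm_inner_le_norm _ _)
    _ ≤ (∑ i, ‖W.starProjection (b i)‖ ^ 2) * ∑ i, ‖y i‖ ^ 2 := sum_mul_sq_le_sq_mul_sq _ _ _
    _ = finrank 𝕜 W * ∑ i, ‖y i‖ ^ 2 := by rw [b.sum_sq_norm_starProjection]

theorem finrank_span_range_le_of_forall_inner_eq_zero {a : E} (ha : a ≠ 0) (C : ι → E)
    (hC : ∀ k, ⟪a, C k⟫_𝕜 = 0) :
    finrank 𝕜 (Submodule.span 𝕜 (Set.range C)) ≤ min (Fintype.card ι) (finrank 𝕜 E - 1) := by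
  refine le_min (finrank_range_le_card C) ?_
  have hspan : Submodule.span 𝕜 (Set.range C) ≤ (𝕜 ∙ a)ᗮ := by
    rw [Submodule.span_le]
    rintro _ ⟨k, rfl⟩
    exact Submodule.mem_orthogonal_singleton_iff_inner_right.2 (hC k)
  have hcompl := (𝕜 ∙ a).finrank_add_finrank_orthogonal
  rw [finrank_span_singleton ha] at hcompl
  have := Submodule.finrank_mono hspan
  omega

theorem OrthonormalBasis.sq_norm_sum_inner_sum_smul_le {κ : Type*} [Fintype κ]
    (b : OrthonormalBasis ι 𝕜 E) {a : E} (ha : a ≠ 0) (C : κ → E) (hC : ∀ k, ⟪a, C k⟫_𝕜 = 0)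
    (v : ι → κ → 𝕜) :
    ‖∑ i, ⟪b i, ∑ k, v i k • C k⟫_𝕜‖ ^ 2 ≤
      (min (Fintype.card κ) (finrank 𝕜 E - 1) : ℕ) * ∑ i, ‖∑ k, v i k • C k‖ ^ 2 := by
  have hmem : ∀ i, ∑ k, v i k • C k ∈ Submodule.span 𝕜 (Set.range C) := fun i =>
    Submodule.sum_mem _ fun k _ => Submodule.smul_mem _ _ (Submodule.subset_span ⟨k, rfl⟩)
  refine (b.sq_norm_sum_inner_le _ hmem).trans ?_
  gcongr
  exact finrank_span_range_le_of_forall_inner_eq_zero ha C hC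

end TraceBound

section GramForm

variable {𝕜 E κ : Type*} [RCLike 𝕜] [NormedAddCommGroup E] [InnerProductSpace 𝕜 E] [Fintype κ]

theorem sum_sum_inner_mul_mul_conj (C : κ → E) (w : κ → 𝕜) :
    ∑ k, ∑ l, ⟪C l, C k⟫_𝕜 * w k * starRingEnd 𝕜 (w l) = (‖∑ k, w k • C k‖ : 𝕜) ^ 2 := by
  rw [← inner_self_eq_norm_sq_to_K, sum_inner, sum_comm]
  simp_rw [inner_sum, inner_smul_left, inner_smul_right]
  exact sum_congr rfl fun _ _ => sum_congr rfl fun _ _ => by ring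

theorem mul_sq_norm_sum_smul_le_of_re_nonneg (C : κ → E) (A : κ → κ → 𝕜) (r : ℝ) (w : κ → 𝕜)
    (h : 0 ≤ RCLike.re (∑ k, ∑ l, (A k l - r * ⟪C l, C k⟫_𝕜) * w k * starRingEnd 𝕜 (w l))) :
    r * ‖∑ k, w k • C k‖ ^ 2 ≤ RCLike.re (∑ k, ∑ l, A k l * w k * starRingEnd 𝕜 (w l)) := by
  have hgram : ∑ k, ∑ l, (r : 𝕜) * ⟪C l, C k⟫_𝕜 * w k * starRingEnd 𝕜 (w l) =
      ((r * ‖∑ k, w k • C k‖ ^ 2 : ℝ) : 𝕜) := by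
    simp only [mul_assoc, ← mul_sum]
    simp only [← mul_assoc, sum_sum_inner_mul_mul_conj]
    push_cast
    rfl
  simp only [sub_mul, sum_sub_distrib, hgram, map_sub, RCLike.ofReal_re] at h
  linarith

variable (𝕜) in
/-- The column `c_{·k}` of the paper is `skodaVector ℂ a ξ_k`. -/
noncomputable def skodaVector (a x : E) : E :=
  ((‖a‖ ^ 2 : ℝ) : 𝕜)⁻¹ • (𝕜 ∙ a)ᗮ.starProjection x

theorem skodaVector_eq (a x : E) :
    skodaVector 𝕜 a x =
      ((‖a‖ ^ 2 : ℝ) : 𝕜)⁻¹ • x - (⟪a, x⟫_𝕜 / ((‖a‖ ^ 2 : ℝ) : 𝕜) ^ 2) • a := by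
  rw [skodaVector, Submodule.starProjection_orthogonal_val, Submodule.starProjection_singleton,
    smul_sub, smul_smul]
  congr 2
  ring

theorem inner_skodaVector_right (a x : E) : ⟪a, skodaVector 𝕜 a x⟫_𝕜 = 0 := by
  rw [skodaVector, inner_smul_right, Submodule.mem_orthogonal_singleton_iff_inner_right.1
    ((𝕜 ∙ a)ᗮ.starProjection_apply_mem x), mul_zero]

theorem mul_inner_skodaVector_skodaVector (a x y : E) :
    ((‖a‖ ^ 2 : ℝ) : 𝕜) * ⟪skodaVector 𝕜 a y, skodaVector 𝕜 a x⟫_𝕜 =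
      ⟪y, x⟫_𝕜 / ((‖a‖ ^ 2 : ℝ) : 𝕜) - ⟪a, x⟫_𝕜 * ⟪y, a⟫_𝕜 / ((‖a‖ ^ 2 : ℝ) : 𝕜) ^ 2 := by
  set P := (𝕜 ∙ a)ᗮ.starProjection
  have hgram : ⟪P y, P x⟫_𝕜 = ⟪y, x⟫_𝕜 - ⟪a, x⟫_𝕜 * ⟪y, a⟫_𝕜 / ((‖a‖ ^ 2 : ℝ) : 𝕜) := by
    rw [Submodule.inner_starProjection_left_eq_right, Submodule.starProjection_eq_self_iff.2
      ((𝕜 ∙ a)ᗮ.starProjection_apply_mem x), Submodule.starProjection_orthogonal_val,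
      Submodule.starProjection_singleton, inner_sub_right, inner_smul_right]
    ring
  rw [skodaVector, skodaVector, inner_smul_left, inner_smul_right, hgram, RCLike.conj_inv,
    RCLike.conj_ofReal]
  by_cases ha : a = 0
  · simp [ha]
  · have hr : ((‖a‖ ^ 2 : ℝ) : 𝕜) ≠ 0 := by simpa using ha
    field_simp

end GramForm

open Complex in
theorem skoda_basic_inequality_dominating_metric_general
    (n p : ℕ)
    (a : Fin p → ℂ) (ha : a ≠ 0) (ξ : Fin n → Fin p → ℂ)
    (A : Fin n → Fin n → ℂ) :
    let conj : ℂ → ℂ := starRingEnd ℂ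
    let ip : (Fin p → ℂ) → (Fin p → ℂ) → ℂ := fun x y => ∑ i, x i * conj (y i)
    let q : ℂ := ip a a
    let H : Fin n → Fin n → ℂ :=
      fun k l => ip (ξ k) (ξ l) / q - ip (ξ k) a * ip a (ξ l) / q ^ 2
    let c : Fin p → Fin n → ℂ :=
      fun j k => ξ k j / q - a j * ip (ξ k) a / q ^ 2
    let m : ℕ := min n (p - 1)
    (∀ w : Fin n → ℂ, 0 ≤ (∑ k, ∑ l, (A k l - H k l) * w k * conj (w l)).re) →
      ∀ v : Fin p → Fin n → ℂ,
        q.re * ‖∑ j, ∑ k, c j k * v j k‖ ^ 2 ≤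
          (m : ℝ) * (∑ j, ∑ k, ∑ l, A k l * v j k * conj (v j l)).re := by
  intro conj ip q H c m hdom v
  set aE : EuclideanSpace ℂ (Fin p) := WithLp.toLp 2 a
  set C : Fin n → EuclideanSpace ℂ (Fin p) := fun k => skodaVector ℂ aE (WithLp.toLp 2 (ξ k))
  have hip : ∀ x z, ip x z = ⟪WithLp.toLp 2 z, WithLp.toLp 2 x⟫_ℂ := fun _ _ => rfl
  have hq : q = ((‖aE‖ ^ 2 : ℝ) : ℂ) := by
    rw [show q = ip a a from rfl, hip, inner_self_eq_norm_sq_to_K]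
    norm_cast
  have hc : ∀ j k, c j k = C k j := fun j k => by
    simp only [c, C, hq, hip, skodaVector_eq, PiLp.sub_apply, PiLp.smul_apply, smul_eq_mul,
      ofReal_pow, coe_algebraMap]
    ring
  have hH : ∀ k l, H k l = ((‖aE‖ ^ 2 : ℝ) : ℂ) * ⟪C l, C k⟫_ℂ := fun k l => by
    simp only [H, hip, hq]
    exact (mul_inner_skodaVector_skodaVector _ _ _).symm
  have htrace : ∑ j, ∑ k, c j k * v j k =
      ∑ j, ⟪EuclideanSpace.basisFun (Fin p) ℂ j, ∑ k, v j k • C k⟫_ℂ := by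
    simp_rw [EuclideanSpace.basisFun_inner]
    simp [hc, mul_comm]
  have hbound := (EuclideanSpace.basisFun (Fin p) ℂ).sq_norm_sum_inner_sum_smul_le
    (mt (WithLp.toLp_eq_zero 2).1 ha) C (fun k => inner_skodaVector_right _ _) v
  rw [finrank_euclideanSpace_fin, Fintype.card_fin] at hbound
  simp only [hH] at hdom
  rw [hq, ofReal_re, htrace, re_sum]
  calc ‖aE‖ ^ 2 * ‖∑ j, ⟪EuclideanSpace.basisFun (Fin p) ℂ j, ∑ k, v j k • C k⟫_ℂ‖ ^ 2
      ≤ ‖aE‖ ^ 2 * (m * ∑ j, ‖∑ k, v j k • C k‖ ^ 2) := by gcongr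
    _ = m * ∑ j, ‖aE‖ ^ 2 * ‖∑ k, v j k • C k‖ ^ 2 := by simp only [mul_sum, mul_left_comm]
    _ ≤ m * ∑ j, (∑ k, ∑ l, A k l * v j k * conj (v j l)).re := by
        gcongr with j
        exact mul_sq_norm_sum_smul_le_of_re_nonneg C A _ (v j) (hdom (v j))

/-- **Skoda's basic inequality, reformulated with a dominating Hermitian matrix.**
If the Hermitian matrix `A` dominates `H` (the complex Hessian of `log|g|²` in
coordinate form), then
`‖a‖² |∑_{j,k} c j k * v j k|² ≤ m ∑_{j,k,l} A k l * v j k * conj (v j l)`. -/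
theorem skoda_basic_inequality_dominating_metric
    (n p : ℕ) (hn : 1 ≤ n) (hp : 1 ≤ p)
    (a : Fin p → ℂ) (ha : a ≠ 0) (ξ : Fin n → Fin p → ℂ)
    (A : Fin n → Fin n → ℂ) (hA : ∀ k l, A k l = starRingEnd ℂ (A l k)) :
    let conj : ℂ → ℂ := starRingEnd ℂ
    let ip : (Fin p → ℂ) → (Fin p → ℂ) → ℂ := fun x y => ∑ i, x i * conj (y i)
    let q : ℂ := ip a a
    let H : Fin n → Fin n → ℂ :=
      fun k l => ip (ξ k) (ξ l) / q - ip (ξ k) a * ip a (ξ l) / q ^ 2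
    let c : Fin p → Fin n → ℂ :=
      fun j k => ξ k j / q - a j * ip (ξ k) a / q ^ 2
    let m : ℕ := min n (p - 1)
    (∀ w : Fin n → ℂ, 0 ≤ (∑ k, ∑ l, (A k l - H k l) * w k * conj (w l)).re) →
      ∀ v : Fin p → Fin n → ℂ,
        q.re * ‖∑ j, ∑ k, c j k * v j k‖ ^ 2 ≤
          (m : ℝ) * (∑ j, ∑ k, ∑ l, A k l * v j k * conj (v j l)).re :=
  skoda_basic_inequality_dominating_metric_general n p a ha ξ A
end

section
/- Let n ≥ 1 and p ≥ 1 be integers and set m = min{n, p−1}. Let a ∈ ℂ^p be nonzero, let ξ₁, …, ξₙ ∈ ℂ^p, and define H_{kl} := ⟨ξ_k, ξ_l⟩/‖a‖² − ⟨ξ_k, a⟩⟨a, ξ_l⟩/‖a‖⁴ and c_{jk} := ξ_k(j)/‖a‖² − a_j⟨ξ_k, a⟩/‖a‖⁴, where ⟨x, y⟩ = Σ_i x_i · conj(y_i). Let A be an n × n complex Hermitian matrix with Σ_{k,l}(A_{kl} − H_{kl}) w_k conj(w_l) ≥ 0 for all w ∈ ℂⁿ. Then for every u₀ ∈ ℂ,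 every real b > 0, and every matrix v = (v_{jk}) ∈ ℂ^{p×n}, one has |2 Re( u₀ · conj( Σ_{j=1}^p Σ_{k=1}^n c_{jk} v_{jk} ) )| ≤ (1/(b‖a‖²)) |u₀|² + b·m· Σ_{j=1}^p Σ_{k,l=1}^n A_{kl} v_{jk} conj(v_{jl}). -/
open Finset Complex

open Module

lemma skoda_norm_sq_eq (p : ℕ) (x : EuclideanSpace ℂ (Fin p)) :
    ‖x‖ ^ 2 = ∑ i, ‖x i‖ ^ 2 := by
  rw [EuclideanSpace.norm_eq, Real.sq_sqrt (by positivity)]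

lemma skoda_key_coord_bound {p m : ℕ} (V : Submodule ℂ (EuclideanSpace ℂ (Fin p)))
    (hV : Module.finrank ℂ V ≤ m) (w : Fin p → EuclideanSpace ℂ (Fin p))
    (hw : ∀ j, w j ∈ V) :
    ‖∑ j, w j j‖ ^ 2 ≤ m * ∑ j, ‖w j‖ ^ 2 := by
  classical
  set r := finrank ℂ V with hr
  set f : Fin r → EuclideanSpace ℂ (Fin p) :=
    fun s => (V.subtypeₗᵢ (stdOrthonormalBasis ℂ V s) : EuclideanSpace ℂ (Fin p)) with hf
  have horth : Orthonormal ℂ f :=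
    (stdOrthonormalBasis ℂ V).orthonormal.comp_linearIsometry _
  have hspan : ∀ x ∈ V, x ∈ Submodule.span ℂ (Set.range f) := by
    intro x hx
    have h0 := (stdOrthonormalBasis ℂ V).toBasis.mem_span ⟨x, hx⟩
    have h1 : x ∈ Submodule.map V.subtype
        (Submodule.span ℂ (Set.range ((stdOrthonormalBasis ℂ V).toBasis))) := ⟨_, h0, rfl⟩
    rw [Submodule.map_span, ← Set.range_comp] at h1
    have h2 : (V.subtype ∘ (stdOrthonormalBasis ℂ V).toBasis) = f := by
      funext s
      simp [hf, Function.comp]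
    rwa [h2] at h1
  have hcoef : ∀ j, ∃ c : Fin r → ℂ, ∑ s, c s • f s = w j := by
    intro j
    exact Submodule.mem_span_range_iff_exists_fun ℂ |>.mp (hspan (w j) (hw j))
  choose c hc using hcoef
  have hpars : ∀ j, ∑ s, ‖c j s‖ ^ 2 = ‖w j‖ ^ 2 := by
    intro j
    have h1 : (inner ℂ (w j) (w j) : ℂ) = ∑ s, (starRingEnd ℂ) (c j s) * (c j s) := by
      rw [← hc j]
      exact horth.inner_sum (c j) (c j) univ
    have h3 := congrArg Complex.re h1
    have h4 : (inner ℂ (w j) (w j) : ℂ).re = ‖w j‖ ^ 2 := inner_self_eq_norm_sq (𝕜 := ℂ) (w j)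
    rw [Complex.re_sum] at h3
    rw [← h4, h3]
    refine Finset.sum_congr rfl fun s _ => ?_
    rw [mul_comm, Complex.mul_conj, Complex.sq_norm, Complex.ofReal_re]
  have hcoord : ∀ j, w j j = ∑ s, c j s * f s j := by
    intro j
    have h1 := congrArg (fun y => EuclideanSpace.proj j y) (hc j)
    simp only [map_sum, map_smul, PiLp.proj_apply, smul_eq_mul] at h1
    exact h1.symm
  have hfnorm : ∀ s, ∑ j, ‖f s j‖ ^ 2 = 1 := by
    intro s
    rw [← skoda_norm_sq_eq, horth.1 s, one_pow]
  have habs : ‖∑ j, w j j‖ ≤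
      ∑ j, ∑ s, ‖c j s‖ * ‖f s j‖ := by
    calc ‖∑ j, w j j‖ ≤ ∑ j, ‖w j j‖ := norm_sum_le _ _
      _ ≤ ∑ j, ∑ s, ‖c j s‖ * ‖f s j‖ := by
          refine Finset.sum_le_sum fun j _ => ?_
          rw [hcoord j]
          refine le_trans (norm_sum_le _ _) ?_
          refine Finset.sum_le_sum fun s _ => ?_
          rw [norm_mul]
  have hCS : (∑ j, ∑ s, ‖c j s‖ * ‖f s j‖) ^ 2 ≤
      (∑ j, ‖w j‖ ^ 2) * r := by
    have h1 := Finset.sum_mul_sq_le_sq_mul_sq (univ : Finset (Fin p × Fin r))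
      (fun t => ‖c t.1 t.2‖) (fun t => ‖f t.2 t.1‖)
    rw [Fintype.sum_prod_type, Fintype.sum_prod_type, Fintype.sum_prod_type] at h1
    calc (∑ j, ∑ s, ‖c j s‖ * ‖f s j‖) ^ 2
        ≤ (∑ j, ∑ s, ‖c j s‖ ^ 2) * ∑ j, ∑ s, ‖f s j‖ ^ 2 := h1
      _ = (∑ j, ‖w j‖ ^ 2) * r := by
          have e1 : (∑ j, ∑ s, ‖c j s‖ ^ 2) = ∑ j, ‖w j‖ ^ 2 :=
            Finset.sum_congr rfl fun j _ => hpars j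
          have e2 : (∑ j : Fin p, ∑ s : Fin r, ‖f s j‖ ^ 2) = (r : ℝ) := by
            rw [Finset.sum_comm]
            simp [hfnorm]
          rw [e1, e2]
  calc ‖∑ j, w j j‖ ^ 2
      ≤ (∑ j, ∑ s, ‖c j s‖ * ‖f s j‖) ^ 2 :=
        pow_le_pow_left₀ (norm_nonneg _) habs 2
    _ ≤ (∑ j, ‖w j‖ ^ 2) * r := hCS
    _ ≤ m * ∑ j, ‖w j‖ ^ 2 := by
        rw [mul_comm]
        refine mul_le_mul_of_nonneg_right (by exact_mod_cast hV) (by positivity)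



set_option maxHeartbeats 2000000 in
/-- **The pointwise Cauchy–Schwarz estimate in the basic estimate for Skoda division.**
For a Hermitian matrix `A` dominating `H`, every `u₀ ∈ ℂ`, `b > 0` and
`v ∈ ℂ^{p×n}`:
`|2 Re(u₀ conj(∑ c j k * v j k))| ≤ (1/(b‖a‖²))|u₀|² + b m ∑ A k l v j k conj (v j l)`. -/
theorem skoda_pointwise_cauchy_schwarz_estimate
    (n p : ℕ) (hn : 1 ≤ n) (hp : 1 ≤ p)
    (a : Fin p → ℂ) (ha : a ≠ 0) (ξ : Fin n → Fin p → ℂ)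
    (A : Fin n → Fin n → ℂ) (hA : ∀ k l, A k l = starRingEnd ℂ (A l k)) :
    let conj : ℂ → ℂ := starRingEnd ℂ
    let ip : (Fin p → ℂ) → (Fin p → ℂ) → ℂ := fun x y => ∑ i, x i * conj (y i)
    let q : ℂ := ip a a
    let H : Fin n → Fin n → ℂ :=
      fun k l => ip (ξ k) (ξ l) / q - ip (ξ k) a * ip a (ξ l) / q ^ 2
    let c : Fin p → Fin n → ℂ :=
      fun j k => ξ k j / q - a j * ip (ξ k) a / q ^ 2
    let m : ℕ := min n (p - 1)
    (∀ w : Fin n → ℂ, 0 ≤ (∑ k, ∑ l, (A k l - H k l) * w k * conj (w l)).re) →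
      ∀ (u₀ : ℂ) (b : ℝ), 0 < b → ∀ v : Fin p → Fin n → ℂ,
        |2 * (u₀ * conj (∑ j, ∑ k, c j k * v j k)).re| ≤
          (1 / (b * q.re)) * ‖u₀‖ ^ 2 +
            b * (m : ℝ) * (∑ j, ∑ k, ∑ l, A k l * v j k * conj (v j l)).re := by
  intro conj ip q H c m hdom u₀ b hb v
  have hcd : conj = starRingEnd ℂ := rfl
  have hips : ∀ x y : Fin p → ℂ, ip x y = ∑ i, x i * starRingEnd ℂ (y i) := fun _ _ => rfl
  have hqd : q = ip a a := rfl
  have hHd : ∀ k l, H k l = ip (ξ k) (ξ l) / q - ip (ξ k) a * ip a (ξ l) / q ^ 2 :=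
    fun _ _ => rfl
  have hcdf : ∀ j k, c j k = ξ k j / q - a j * ip (ξ k) a / q ^ 2 := fun _ _ => rfl
  have hmd : m = min n (p - 1) := rfl
  have hconj_ip : ∀ x y : Fin p → ℂ, starRingEnd ℂ (ip x y) = ip y x := by
    intro x y
    rw [hips, hips, map_sum]
    refine Finset.sum_congr rfl fun i _ => ?_
    simp [mul_comm]
  -- Q and its properties
  have hq : q = ((∑ i, Complex.normSq (a i) : ℝ) : ℂ) := by
    rw [hqd, hips]
    push_cast
    exact Finset.sum_congr rfl fun i _ => (Complex.mul_conj (a i))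
  set Q : ℝ := ∑ i, Complex.normSq (a i) with hQ
  have hQpos : 0 < Q := by
    obtain ⟨i, hi⟩ := Function.ne_iff.mp ha
    exact Finset.sum_pos' (fun i _ => Complex.normSq_nonneg _)
      ⟨i, Finset.mem_univ i, Complex.normSq_pos.mpr hi⟩
  have hq0 : q ≠ 0 := by
    rw [hq]; exact_mod_cast hQpos.ne'
  have hqre : q.re = Q := by rw [hq]; exact Complex.ofReal_re _
  have hqconj : starRingEnd ℂ q = q := by rw [hq]; exact Complex.conj_ofReal _
  have hipaa : ip a a = q := rfl
  -- the vectors η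
  set aE : EuclideanSpace ℂ (Fin p) := WithLp.toLp 2 a with haE
  have haE0 : aE ≠ 0 := by
    intro h; apply ha; simpa [haE] using congrArg WithLp.ofLp h
  set η : Fin n → EuclideanSpace ℂ (Fin p) :=
    fun k => WithLp.toLp 2 (fun i => ξ k i - a i * ip (ξ k) a / q : Fin p → ℂ) with hη
  have hketa : ∀ k l, ip (η k) (η l) = q * H k l := by
    intro k l
    have e1 : ∀ i, η k i * starRingEnd ℂ (η l i) =
        ξ k i * starRingEnd ℂ (ξ l i)
        - (ip a (ξ l) / q) * (ξ k i * starRingEnd ℂ (a i))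
        - (ip (ξ k) a / q) * (a i * starRingEnd ℂ (ξ l i))
        + (ip (ξ k) a * ip a (ξ l) / (q * q)) * (a i * starRingEnd ℂ (a i)) := by
      intro i
      rw [hη]
      simp only [WithLp.ofLp_toLp, map_sub, map_mul, map_div₀, hqconj, hconj_ip]
      field_simp
      ring
    have e2 : ip (η k) (η l) = ip (ξ k) (ξ l)
        - (ip a (ξ l) / q) * ip (ξ k) a
        - (ip (ξ k) a / q) * ip a (ξ l)
        + (ip (ξ k) a * ip a (ξ l) / (q * q)) * ip a a := by
      rw [hips (η k) (η l)]
      rw [Finset.sum_congr rfl fun i _ => e1 i]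
      rw [Finset.sum_add_distrib, Finset.sum_sub_distrib, Finset.sum_sub_distrib,
        ← Finset.mul_sum, ← Finset.mul_sum, ← Finset.mul_sum]
    rw [e2, hipaa, hHd]
    field_simp
    ring
  have hceta : ∀ j k, η k j = q * c j k := by
    intro j k
    rw [hη, hcdf]
    simp only [WithLp.ofLp_toLp]
    field_simp
  -- orthogonality of η to a
  have hηa : ∀ k, (inner ℂ aE (η k) : ℂ) = 0 := by
    intro k
    rw [PiLp.inner_apply]
    have e1 : ∀ i : Fin p, (inner ℂ (aE i) (η k i) : ℂ) =
        ξ k i * (starRingEnd ℂ) (a i) - (ip (ξ k) a / q) * (a i * (starRingEnd ℂ) (a i)) := by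
      intro i
      rw [RCLike.inner_apply, hη, haE]
      simp only [WithLp.ofLp_toLp]
      field_simp
    rw [Finset.sum_congr rfl fun i _ => e1 i]
    rw [Finset.sum_sub_distrib, ← Finset.mul_sum, ← hips, ← hips, hipaa]
    field_simp
    simp
  -- the subspace V
  set V : Submodule ℂ (EuclideanSpace ℂ (Fin p)) :=
    (Submodule.span ℂ (Set.range η)) ⊓ (ℂ ∙ aE)ᗮ with hV
  have hηV : ∀ k, η k ∈ V := by
    intro k
    refine ⟨Submodule.subset_span ⟨k, rfl⟩, ?_⟩
    exact Submodule.mem_orthogonal_singleton_iff_inner_right.mpr (hηa k)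
  -- the vectors w
  set wE : Fin p → EuclideanSpace ℂ (Fin p) := fun j => ∑ k, v j k • η k with hwE
  have hwV : ∀ j, wE j ∈ V := by
    intro j
    exact Submodule.sum_mem _ fun k _ => Submodule.smul_mem _ _ (hηV k)
  have hwcoord : ∀ j i, wE j i = ∑ k, v j k * η k i := by
    intro j i
    have h1 := congrArg (fun y => EuclideanSpace.proj i y) (hwE ▸ rfl : wE j = ∑ k, v j k • η k)
    simp only [map_sum, map_smul, PiLp.proj_apply, smul_eq_mul] at h1
    exact h1
  have hinner_η : ∀ k l, (inner ℂ (η k) (η l) : ℂ) = ip (η l) (η k) := by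
    intro k l
    rw [PiLp.inner_apply, hips]
    exact Finset.sum_congr rfl fun i _ => by rw [RCLike.inner_apply]
  have hwinner : ∀ j, (inner ℂ (wE j) (wE j) : ℂ) =
      ∑ k, ∑ l, v j k * (starRingEnd ℂ (v j l) * (q * H k l)) := by
    intro j
    rw [hwE]
    simp only [inner_sum, sum_inner, inner_smul_left, inner_smul_right, Finset.mul_sum]
    refine Finset.sum_congr rfl fun k _ => Finset.sum_congr rfl fun l _ => ?_
    rw [hinner_η, hketa]
  have hsq : ∀ j, (inner ℂ (wE j) (wE j) : ℂ) = ((‖wE j‖ ^ 2 : ℝ) : ℂ) := by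
    intro j
    rw [inner_self_eq_norm_sq_to_K]
    norm_cast
  have hT : ∀ j, (∑ k, ∑ l, H k l * v j k * starRingEnd ℂ (v j l)) =
      ((‖wE j‖ ^ 2 : ℝ) : ℂ) / q := by
    intro j
    have e : q * (∑ k, ∑ l, H k l * v j k * starRingEnd ℂ (v j l)) =
        ((‖wE j‖ ^ 2 : ℝ) : ℂ) := by
      rw [← hsq j, hwinner j, Finset.mul_sum]
      refine Finset.sum_congr rfl fun k _ => ?_
      rw [Finset.mul_sum]
      refine Finset.sum_congr rfl fun l _ => ?_
      ring
    field_simp [hq0] at e ⊢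
    rw [← e]
  -- rank bound
  have hfr : Module.finrank ℂ V ≤ m := by
    have h1 : Module.finrank ℂ V ≤
        Module.finrank ℂ (Submodule.span ℂ (Set.range η)) :=
      Submodule.finrank_mono inf_le_left
    have h2 : Module.finrank ℂ (Submodule.span ℂ (Set.range η)) ≤ n := by
      have := finrank_range_le_card (R := ℂ) η
      rw [Set.finrank] at this
      simpa using this
    have h3 : Module.finrank ℂ V ≤ Module.finrank ℂ ((ℂ ∙ aE)ᗮ) :=
      Submodule.finrank_mono inf_le_right
    have h4 : Module.finrank ℂ (ℂ ∙ aE) = 1 := finrank_span_singleton haE0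
    have h5 := Submodule.finrank_add_finrank_orthogonal (K := ℂ ∙ aE)
    have h6 : Module.finrank ℂ (EuclideanSpace ℂ (Fin p)) = p := finrank_euclideanSpace_fin
    rw [h4, h6] at h5
    rw [hmd]
    omega
  -- the key estimate
  have hkey := skoda_key_coord_bound V hfr wE hwV
  set S : ℂ := ∑ j, ∑ k, c j k * v j k with hS
  have hqS : (∑ j, wE j j) = q * S := by
    rw [hS, Finset.mul_sum]
    refine Finset.sum_congr rfl fun j _ => ?_
    rw [hwcoord j j, Finset.mul_sum]
    refine Finset.sum_congr rfl fun k _ => ?_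
    rw [hceta]
    ring
  set W : ℝ := ∑ j, ‖wE j‖ ^ 2 with hWdef
  have hW0 : 0 ≤ W := by positivity
  have habsS : Q ^ 2 * ‖S‖ ^ 2 ≤ (m : ℝ) * W := by
    have e : ‖∑ j, wE j j‖ ^ 2 = Q ^ 2 * ‖S‖ ^ 2 := by
      rw [hqS, norm_mul, hq, Complex.norm_of_nonneg hQpos.le]
      ring
    rw [e] at hkey
    exact hkey
  -- comparison with A
  have hTre : ∀ j, (∑ k, ∑ l, H k l * v j k * starRingEnd ℂ (v j l)).re = ‖wE j‖ ^ 2 / Q := by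
    intro j
    rw [hT j, hq, ← Complex.ofReal_div, Complex.ofReal_re]
  have hHA : ∀ j, ‖wE j‖ ^ 2 / Q ≤
      (∑ k, ∑ l, A k l * v j k * starRingEnd ℂ (v j l)).re := by
    intro j
    have h0 := hdom (v j)
    rw [hcd] at h0
    have e : (∑ k, ∑ l, (A k l - H k l) * v j k * starRingEnd ℂ (v j l)) =
        (∑ k, ∑ l, A k l * v j k * starRingEnd ℂ (v j l))
          - (∑ k, ∑ l, H k l * v j k * starRingEnd ℂ (v j l)) := by
      rw [← Finset.sum_sub_distrib]
      refine Finset.sum_congr rfl fun k _ => ?_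
      rw [← Finset.sum_sub_distrib]
      refine Finset.sum_congr rfl fun l _ => ?_
      ring
    rw [e, Complex.sub_re] at h0
    rw [← hTre j]
    linarith
  have hWQA : W / Q ≤ (∑ j, ∑ k, ∑ l, A k l * v j k * starRingEnd ℂ (v j l)).re := by
    rw [Complex.re_sum, hWdef, Finset.sum_div]
    exact Finset.sum_le_sum fun j _ => hHA j
  -- final assembly
  rw [hcd, hqre]
  have c1 : |2 * (u₀ * starRingEnd ℂ S).re| ≤ 2 * (‖u₀‖ * ‖S‖) := by
    calc |2 * (u₀ * starRingEnd ℂ S).re| = 2 * |(u₀ * starRingEnd ℂ S).re| := by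
          rw [abs_mul]; norm_num
      _ ≤ 2 * ‖u₀ * starRingEnd ℂ S‖ := by
          linarith [Complex.abs_re_le_norm (u₀ * starRingEnd ℂ S)]
      _ = 2 * (‖u₀‖ * ‖S‖) := by
          rw [norm_mul, Complex.norm_conj]
  have hbQ : 0 < b * Q := mul_pos hb hQpos
  have c2 : 2 * (‖u₀‖ * ‖S‖) ≤
      ‖u₀‖ ^ 2 / (b * Q) + (b * Q) * ‖S‖ ^ 2 := by
    set u := Real.sqrt (b * Q) with hu
    have hu2 : u ^ 2 = b * Q := Real.sq_sqrt hbQ.le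
    have hu0 : u ≠ 0 := (Real.sqrt_pos.mpr hbQ).ne'
    have e1 : ‖u₀‖ ^ 2 / (b * Q) = (‖u₀‖ / u) ^ 2 := by
      rw [div_pow, hu2]
    have e2 : (b * Q) * ‖S‖ ^ 2 = (u * ‖S‖) ^ 2 := by
      rw [mul_pow, hu2]
    have e3 : ‖u₀‖ * ‖S‖ = (‖u₀‖ / u) * (u * ‖S‖) := by
      field_simp
    rw [e1, e2, e3, ← mul_assoc]
    exact two_mul_le_add_sq _ _
  have c3 : (b * Q) * ‖S‖ ^ 2 ≤ b * (m : ℝ) * (W / Q) := by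
    have hbq' : 0 ≤ b / Q := (div_pos hb hQpos).le
    calc (b * Q) * ‖S‖ ^ 2 = (b / Q) * (Q ^ 2 * ‖S‖ ^ 2) := by
          field_simp
      _ ≤ (b / Q) * ((m : ℝ) * W) := mul_le_mul_of_nonneg_left habsS hbq'
      _ = b * (m : ℝ) * (W / Q) := by field_simp
  have c4 : b * (m : ℝ) * (W / Q) ≤
      b * (m : ℝ) * (∑ j, ∑ k, ∑ l, A k l * v j k * starRingEnd ℂ (v j l)).re := by
    refine mul_le_mul_of_nonneg_left hWQA ?_
    positivity
  have e4 : 1 / (b * Q) * ‖u₀‖ ^ 2 = ‖u₀‖ ^ 2 / (b * Q) := by ring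
  rw [e4]
  linarith
end

section
/- Let p ≥ 1 and n ≥ 1 be integers, let a ∈ ℂ^p be nonzero, let ξ₁, …, ξₙ ∈ ℂ^p, let ε > 0 and γ ≥ 0 be real. Set q := ‖a‖², T_{kl} := ⟨ξ_k, ξ_l⟩, s_k := ⟨ξ_k, a⟩, H_{kl} := T_{kl}/q − s_k conj(s_l)/q², and H^ε_{kl} := T_{kl}/(q+ε²) − s_k conj(s_l)/(q+ε²)², where ⟨x, y⟩ = Σ_i x_i · conj(y_i). Then the Hermitian form of (γ·I + H^ε) − (q/(q+ε²))·(γ·I + H) is positive semidefinite, i.e. Σ_{k,l} [ γδ_{kl} + H^ε_{kl} − (q/(q+ε²))(γδ_{kl} + H_{kl}) ] w_k conj(w_l) ≥ 0 for all w ∈ ℂⁿ. -/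
open Finset Complex

private lemma entry_helper (Tkl skl d γ e2 q Q : ℂ) (hq : q ≠ 0) (hQ : Q ≠ 0)
    (hE : Q = q + e2) :
    γ * d + (Tkl / Q - skl / Q ^ 2) - (q / Q) * (γ * d + (Tkl / q - skl / q ^ 2))
      = (γ * e2 / Q) * d + (e2 / (q * Q ^ 2)) * skl := by
  have hu : q * q⁻¹ = 1 := mul_inv_cancel₀ hq
  have hv : Q * Q⁻¹ = 1 := mul_inv_cancel₀ hQ
  have he2 : e2 = Q - q := by rw [hE]; ring
  subst he2
  linear_combination (-Tkl * Q⁻¹ + skl * (q⁻¹ * Q⁻¹ + Q⁻¹ ^ 2)) * hu +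
    (-(γ * d) - skl * q⁻¹ * Q⁻¹) * hv

/-- **Metric comparison for the regularized weight.**
The Hermitian form of `(γI + Hε) − (q/(q+ε²))(γI + H)` is positive semidefinite. -/
theorem regularized_metric_domination
    (n p : ℕ) (hn : 1 ≤ n) (hp : 1 ≤ p)
    (a : Fin p → ℂ) (ha : a ≠ 0) (ξ : Fin n → Fin p → ℂ)
    (ε γ : ℝ) (hε : 0 < ε) (hγ : 0 ≤ γ) :
    let conj : ℂ → ℂ := starRingEnd ℂ
    let ip : (Fin p → ℂ) → (Fin p → ℂ) → ℂ := fun x y => ∑ i, x i * conj (y i)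
    let q : ℝ := ∑ i, Complex.normSq (a i)
    let T : Fin n → Fin n → ℂ := fun k l => ip (ξ k) (ξ l)
    let s : Fin n → ℂ := fun k => ip (ξ k) a
    let H : Fin n → Fin n → ℂ :=
      fun k l => T k l / (q : ℂ) - s k * conj (s l) / (q : ℂ) ^ 2
    let Hε : Fin n → Fin n → ℂ :=
      fun k l => T k l / ((q : ℂ) + (ε : ℂ) ^ 2) - s k * conj (s l) / ((q : ℂ) + (ε : ℂ) ^ 2) ^ 2
    let δ : Fin n → Fin n → ℂ := fun k l => if k = l then 1 else 0
    ∀ w : Fin n → ℂ,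
      0 ≤ (∑ k, ∑ l,
        ((γ : ℂ) * δ k l + Hε k l -
            ((q : ℂ) / ((q : ℂ) + (ε : ℂ) ^ 2)) * ((γ : ℂ) * δ k l + H k l)) *
          w k * conj (w l)).re := by
  intro conj ip q T s H Hε δ w
  have hconj : conj = starRingEnd ℂ := rfl
  have hq : 0 < q := by
    obtain ⟨i, hi⟩ : ∃ i, a i ≠ 0 := by
      by_contra h; push_neg at h; exact ha (funext h)
    exact Finset.sum_pos' (fun i _ => Complex.normSq_nonneg _)
      ⟨i, Finset.mem_univ i, Complex.normSq_pos.2 hi⟩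
  have hQ : 0 < q + ε ^ 2 := by positivity
  have hqC : (q : ℂ) ≠ 0 := by exact_mod_cast hq.ne'
  have hQC : (q : ℂ) + (ε : ℂ) ^ 2 ≠ 0 := by
    have h1 : ((q + ε ^ 2 : ℝ) : ℂ) ≠ 0 := by exact_mod_cast hQ.ne'
    push_cast at h1
    exact h1
  set c1 : ℂ := (γ : ℂ) * (ε : ℂ) ^ 2 / ((q : ℂ) + (ε : ℂ) ^ 2) with hc1
  set c2 : ℂ := (ε : ℂ) ^ 2 / ((q : ℂ) * ((q : ℂ) + (ε : ℂ) ^ 2) ^ 2) with hc2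
  have key : ∀ k l : Fin n, ((γ : ℂ) * δ k l + Hε k l -
        ((q : ℂ) / ((q : ℂ) + (ε : ℂ) ^ 2)) * ((γ : ℂ) * δ k l + H k l))
      = c1 * δ k l + c2 * (s k * conj (s l)) := fun k l =>
    entry_helper (T k l) (s k * conj (s l)) (δ k l) (γ : ℂ) ((ε : ℂ) ^ 2)
      (q : ℂ) ((q : ℂ) + (ε : ℂ) ^ 2) hqC hQC rfl
  have sum_eq : (∑ k, ∑ l,
        ((γ : ℂ) * δ k l + Hε k l -
            ((q : ℂ) / ((q : ℂ) + (ε : ℂ) ^ 2)) * ((γ : ℂ) * δ k l + H k l)) *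
          w k * conj (w l))
      = c1 * ((∑ k, Complex.normSq (w k) : ℝ) : ℂ)
        + c2 * ((Complex.normSq (∑ k, s k * w k) : ℝ) : ℂ) := by
    have step1 : (∑ k, ∑ l,
          ((γ : ℂ) * δ k l + Hε k l -
              ((q : ℂ) / ((q : ℂ) + (ε : ℂ) ^ 2)) * ((γ : ℂ) * δ k l + H k l)) *
            w k * conj (w l))
        = ∑ k, ∑ l, (c1 * δ k l * (w k * conj (w l))
            + c2 * ((s k * w k) * conj (s l * w l))) := by
      refine Finset.sum_congr rfl fun k _ => Finset.sum_congr rfl fun l _ => ?_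
      rw [key k l, hconj]
      simp only [map_mul]
      ring
    rw [step1]
    rw [Finset.sum_congr rfl fun k _ => Finset.sum_add_distrib, Finset.sum_add_distrib]
    congr 1
    · have inner : ∀ k : Fin n, (∑ l, c1 * δ k l * (w k * conj (w l)))
          = c1 * (w k * conj (w k)) := by
        intro k
        rw [hconj]
        simp [δ, mul_ite, mul_zero, ite_mul, zero_mul, Finset.sum_ite_eq]
      rw [Finset.sum_congr rfl fun k _ => inner k]
      rw [hconj]
      simp_rw [Complex.mul_conj]
      rw [← Finset.mul_sum]
      push_cast
      ring
    · have inner : ∀ k : Fin n, (∑ l, c2 * ((s k * w k) * conj (s l * w l)))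
          = c2 * ((s k * w k) * conj (∑ l, s l * w l)) := by
        intro k
        rw [hconj, map_sum, Finset.mul_sum, Finset.mul_sum]
      rw [Finset.sum_congr rfl fun k _ => inner k, ← Finset.mul_sum, ← Finset.sum_mul,
        hconj, Complex.mul_conj]
  rw [sum_eq]
  have hc1' : c1 = ((γ * ε ^ 2 / (q + ε ^ 2) : ℝ) : ℂ) := by rw [hc1]; push_cast; ring
  have hc2' : c2 = ((ε ^ 2 / (q * (q + ε ^ 2) ^ 2) : ℝ) : ℂ) := by rw [hc2]; push_cast; ring
  rw [hc1', hc2', ← Complex.ofReal_mul, ← Complex.ofReal_mul,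
    ← Complex.ofReal_add, Complex.ofReal_re]
  have h3 : (0:ℝ) ≤ ∑ k, Complex.normSq (w k) := Finset.sum_nonneg fun k _ => normSq_nonneg _
  have h4 : (0:ℝ) ≤ Complex.normSq (∑ k, s k * w k) := normSq_nonneg _
  have h1 : 0 ≤ γ * ε ^ 2 / (q + ε ^ 2) := by positivity
  have h2 : 0 ≤ ε ^ 2 / (q * (q + ε ^ 2) ^ 2) := by positivity
  positivity
end

section
/- Let H₁, H₂, H₃ be complex Hilbert spaces, let T₁ : H₁ → H₂ be a continuous linear operator, and let T₂ be a closed densely defined unbounded linear operator from H₁ to H₃ (a linear map defined on a dense subspace Dom(T₂) ⊆ H₁ whose graph is closed). Let F be a closed subspace of H₂ such that T₁(Ker(T₂)) ⊆ F, where Ker(T₂) = { h ∈ Dom(T₂) : T₂ h = 0 }. Let T₁* : H₂ → H₁ denote the Hilbert adjoint of T₁ and let T₂* denote the adjoint of T₂, a closed densely defined operator from H₃ to H₁. Suppose there exists a constant c > 0 such that c‖u‖ ≤ ‖T₁* u + T₂* v‖ for every u ∈ F and every v ∈ Dom(T₂*) that is orthogonal to Ker(T₂*) = { w ∈ Dom(T₂*)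 : T₂* w = 0 }. Then for every u ∈ F there exists h ∈ Ker(T₂) with T₁ h = u and ‖h‖ ≤ c⁻¹ ‖u‖; in particular T₁(Ker(T₂)) = F. -/
/-!
Put `K = (ran T₂*)ᗮ`. Since `T₂` is closed, its graph is its double orthogonal, which gives
`K ⊆ Ker T₂`; so `T₁` maps `K` into `F` and `B := P_F ∘ T₁ : K → F` has adjoint
`B* u = P_K (T₁* u)`. Removing from `v` its component in `Ker T₂* = (ran T₂)ᗮ` does not change
`T₂* v`, so the hypothesis holds for every `v ∈ Dom T₂*`, hence by continuity on the closure of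
`ran T₂*`, which contains `P_K (T₁* u) - T₁* u`: thus `c‖u‖ ≤ ‖B* u‖`. Then `B B*` is coercive
on `F`, hence onto, and `h = B* x` with `B B* x = u` satisfies `‖h‖² = ⟪u, x⟫ ≤ ‖u‖ c⁻¹ ‖h‖`.
-/

open scoped InnerProductSpace InnerProduct LinearPMap
open RCLike

namespace LinearPMap

section Ker

variable {R M N : Type*} [Ring R] [AddCommGroup M] [Module R M] [AddCommGroup N] [Module R N]

def ker (T : M →ₗ.[R] N) : Submodule R M :=
  (LinearMap.ker T.toFun).map T.domain.subtype

theorem mem_ker {T : M →ₗ.[R] N} {x : M} : x ∈ T.ker ↔ ∃ hx : x ∈ T.domain, T ⟨x, hx⟩ = 0 := by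
  simp [ker]

end Ker

variable {𝕜 E F : Type*} [RCLike 𝕜]
  [NormedAddCommGroup E] [InnerProductSpace 𝕜 E] [NormedAddCommGroup F] [InnerProductSpace 𝕜 F]

theorem ker_adjoint [CompleteSpace E] {T : E →ₗ.[𝕜] F} (hT : Dense (T.domain : Set E)) :
    T†.ker = (LinearMap.range T.toFun)ᗮ := by
  ext y
  rw [mem_ker, Submodule.mem_orthogonal]
  constructor
  · rintro ⟨hy, hzero⟩ _ ⟨x, rfl⟩
    rw [inner_eq_zero_symm]
    exact (adjoint_isFormalAdjoint hT ⟨y, hy⟩ x).symm.trans (by rw [hzero, inner_zero_left])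
  · intro hy
    have hzero : ∀ x : T.domain, ⟪(0 : E), x⟫_𝕜 = ⟪y, T x⟫_𝕜 := fun x => by
      rw [inner_zero_left, eq_comm, inner_eq_zero_symm]
      exact hy _ ⟨x, rfl⟩
    exact ⟨mem_adjoint_domain_of_exists y ⟨0, hzero⟩, adjoint_apply_eq hT _ hzero⟩

theorem orthogonal_range_adjoint_le_ker [CompleteSpace E] [CompleteSpace F] {T : E →ₗ.[𝕜] F}
    (hT : Dense (T.domain : Set E)) (hcl : T.IsClosed) :
    (LinearMap.range T†.toFun)ᗮ ≤ T.ker := by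
  intro x hx
  let G : Submodule 𝕜 (WithLp 2 (E × F)) :=
    T.graph.comap (WithLp.linearEquiv 2 𝕜 (E × F)).toLinearMap
  have hG : _root_.IsClosed (G : Set (WithLp 2 (E × F))) :=
    hcl.preimage (WithLp.prod_continuous_ofLp 2 E F)
  -- Every `(a, b) ⊥ graph T` has `b ∈ Dom T†` with `T† b = -a`, and `x ⊥ T† b`.
  have hperp : WithLp.toLp 2 (x, (0 : F)) ∈ Gᗮᗮ := by
    refine (Submodule.mem_orthogonal' _ _).mpr fun z hz => ?_
    have hadj : ((WithLp.ofLp z).2, -(WithLp.ofLp z).1) ∈ T†.graph := by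
      rw [adjoint_graph_eq_graph_adjoint hT, Submodule.mem_adjoint_iff]
      intro a b hab
      have := Submodule.inner_right_of_mem_orthogonal (u := WithLp.toLp 2 (a, b)) hab hz
      rw [WithLp.prod_inner_apply] at this
      simpa only [WithLp.ofLp_toLp, inner_neg_right, sub_neg_eq_add, add_comm] using this
    obtain ⟨y, -, hTy⟩ := (mem_graph_iff _).mp hadj
    have hz₁ : (WithLp.ofLp z).1 = -(T†) y := by rw [hTy, neg_neg]
    rw [WithLp.prod_inner_apply, WithLp.ofLp_toLp, inner_zero_left, add_zero, hz₁,
      inner_neg_right, neg_eq_zero]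
    exact Submodule.inner_left_of_mem_orthogonal (LinearMap.mem_range_self _ y) hx
  rw [Submodule.orthogonal_orthogonal_eq_closure, hG.submodule_topologicalClosure_eq] at hperp
  obtain ⟨⟨y, hy⟩, rfl, hTy⟩ := (mem_graph_iff _).mp hperp
  exact mem_ker.mpr ⟨hy, hTy⟩

theorem exists_orthogonal_ker_adjoint_apply_eq [CompleteSpace E] [CompleteSpace F]
    {T : E →ₗ.[𝕜] F} (hT : Dense (T.domain : Set E)) (v : T†.domain) :
    ∃ v₀ : T†.domain, (∀ w : T†.domain, (T†) w = 0 → ⟪(v₀ : F), w⟫_𝕜 = 0) ∧ (T†) v₀ = (T†) v := by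
  set N := (LinearMap.range T.toFun)ᗮ
  obtain ⟨hn, hTn⟩ := mem_ker.mp <| (ker_adjoint hT).ge (N.starProjection_apply_mem v)
  refine ⟨v - ⟨_, hn⟩, fun w hw => ?_, by rw [map_sub, hTn, sub_zero]⟩
  have hwN : (w : F) ∈ N := (ker_adjoint hT).le (mem_ker.mpr ⟨w.2, hw⟩)
  exact Submodule.inner_left_of_mem_orthogonal hwN (N.sub_starProjection_mem_orthogonal v)

end LinearPMap

theorem Submodule.le_norm_starProjection_orthogonal {𝕜 E : Type*} [RCLike 𝕜]
    [NormedAddCommGroup E] [InnerProductSpace 𝕜 E] [CompleteSpace E] (K : Submodule 𝕜 E)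
    {x : E} {m : ℝ} (h : ∀ r ∈ K, m ≤ ‖x + r‖) : m ≤ ‖Kᗮ.starProjection x‖ := by
  have hclosed : IsClosed {r : E | m ≤ ‖x + r‖} := isClosed_le continuous_const (by fun_prop)
  have hmem : Kᗮ.starProjection x - x ∈ closure (K : Set E) := by
    rw [← K.topologicalClosure_coe, SetLike.mem_coe, ← K.orthogonal_orthogonal_eq_closure,
      ← neg_sub]
    exact neg_mem (Kᗮ.sub_starProjection_mem_orthogonal x)
  have : m ≤ ‖x + (Kᗮ.starProjection x - x)‖ := closure_minimal h hclosed hmem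
  rwa [add_sub_cancel] at this

namespace ContinuousLinearMap

variable {𝕜 E G : Type*} [RCLike 𝕜] [NormedAddCommGroup E] [InnerProductSpace 𝕜 E]
  [NormedAddCommGroup G] [InnerProductSpace 𝕜 G] [CompleteSpace G]

theorem surjective_of_coercive (T : G →L[𝕜] G) {c : ℝ} (hc : 0 < c)
    (hT : ∀ x, c * ‖x‖ ^ 2 ≤ re ⟪T x, x⟫_𝕜) : Function.Surjective T := by
  have hbelow : ∀ x, ‖x‖ ≤ c⁻¹ * ‖T x‖ := by
    intro x
    rw [le_inv_mul_iff₀ hc]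
    rcases (norm_nonneg x).eq_or_lt with hx | hx
    · rw [← hx, mul_zero]
      exact norm_nonneg _
    refine le_of_mul_le_mul_right ?_ hx
    calc c * ‖x‖ * ‖x‖ = c * ‖x‖ ^ 2 := by ring
      _ ≤ re ⟪T x, x⟫_𝕜 := hT x
      _ ≤ ‖T x‖ * ‖x‖ := (re_le_norm _).trans (norm_inner_le_norm _ _)
  have hclosed : IsClosed (T.range : Set G) :=
    (T.antilipschitz_of_bound (K := c⁻¹.toNNReal) (by simpa [hc.le] using hbelow)).isClosed_range
      T.uniformContinuous
  have hdense : T.rangeᗮ = ⊥ := by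
    refine (Submodule.eq_bot_iff _).mpr fun y hy => ?_
    have h0 : ⟪T y, y⟫_𝕜 = 0 :=
      Submodule.inner_right_of_mem_orthogonal (LinearMap.mem_range_self (T : G →ₗ[𝕜] G) y) hy
    have hy2 : ‖y‖ ^ 2 ≤ 0 := nonpos_of_mul_nonpos_right (by simpa [h0] using hT y) hc
    simpa using hy2
  refine LinearMap.range_eq_top.mp ?_
  rw [← hclosed.submodule_topologicalClosure_eq]
  exact Submodule.topologicalClosure_eq_top_iff.mpr hdense

theorem exists_preimage_norm_le_of_le_norm_adjoint [CompleteSpace E] (B : E →L[𝕜] G) {c : ℝ}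
    (hc : 0 < c) (hB : ∀ y, c * ‖y‖ ≤ ‖(B†) y‖) (u : G) :
    ∃ h, B h = u ∧ ‖h‖ ≤ c⁻¹ * ‖u‖ := by
  have hsq : ∀ y, ‖(B†) y‖ ^ 2 = re ⟪(B ∘L B†) y, y⟫_𝕜 := by
    simpa only [adjoint_adjoint] using (B†).apply_norm_sq_eq_inner_adjoint_left
  have hcoercive : ∀ y, c ^ 2 * ‖y‖ ^ 2 ≤ re ⟪(B ∘L B†) y, y⟫_𝕜 := fun y => by
    rw [← hsq, ← mul_pow]
    exact pow_le_pow_left₀ (by positivity) (hB y) 2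
  obtain ⟨y, rfl⟩ := (B ∘L B†).surjective_of_coercive (pow_pos hc 2) hcoercive u
  refine ⟨(B†) y, rfl, (le_inv_mul_iff₀ hc).mpr ?_⟩
  have hupper : ‖(B†) y‖ ^ 2 ≤ ‖(B ∘L B†) y‖ * ‖y‖ :=
    (hsq y).trans_le ((re_le_norm _).trans (norm_inner_le_norm _ _))
  rcases (norm_nonneg ((B†) y)).eq_or_lt with hzero | hpos
  · rw [← hzero, mul_zero]
    exact norm_nonneg _
  refine le_of_mul_le_mul_right ?_ hpos
  calc c * ‖(B†) y‖ * ‖(B†) y‖ = c * ‖(B†) y‖ ^ 2 := by ring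
    _ ≤ c * (‖(B ∘L B†) y‖ * ‖y‖) := by gcongr
    _ = ‖(B ∘L B†) y‖ * (c * ‖y‖) := by ring
    _ ≤ ‖(B ∘L B†) y‖ * ‖(B†) y‖ := by gcongr; exact hB y

theorem coe_adjoint_compression_apply {F : Type*} [NormedAddCommGroup F]
    [InnerProductSpace 𝕜 F] [CompleteSpace E] [CompleteSpace F] (A : E →L[𝕜] F)
    (U : Submodule 𝕜 E) (V : Submodule 𝕜 F) [CompleteSpace U] [CompleteSpace V] (y : V) :
    (((V.orthogonalProjectionOnto ∘L A ∘L U.subtypeL)†) y : E) = U.starProjection ((A†) y) := by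
  simp only [adjoint_comp, Submodule.adjoint_orthogonalProjectionOnto]
  rw [Submodule.adjoint_subtypeL]
  rfl

end ContinuousLinearMap

/-- **Skoda's functional-analysis lemma (sufficiency, with the norm bound).**
If `c‖u‖ ≤ ‖T₁* u + T₂* v‖` for all `u ∈ F` and all `v ∈ Dom(T₂*)` orthogonal to
`Ker(T₂*)`, then every `u ∈ F` is of the form `T₁ h` with `h ∈ Ker(T₂)` and
`‖h‖ ≤ c⁻¹‖u‖`; in particular `T₁(Ker T₂) = F`. -/
theorem skoda_functional_lemma_sufficiency
    {H₁ H₂ H₃ : Type*}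
    [NormedAddCommGroup H₁] [InnerProductSpace ℂ H₁] [CompleteSpace H₁]
    [NormedAddCommGroup H₂] [InnerProductSpace ℂ H₂] [CompleteSpace H₂]
    [NormedAddCommGroup H₃] [InnerProductSpace ℂ H₃] [CompleteSpace H₃]
    (T₁ : H₁ →L[ℂ] H₂) (T₂ : H₁ →ₗ.[ℂ] H₃)
    (hdense : Dense (T₂.domain : Set H₁)) (hclosed : T₂.IsClosed)
    (F : Submodule ℂ H₂) (hF : IsClosed (F : Set H₂))
    (hker : T₁ '' {x : H₁ | ∃ hx : x ∈ T₂.domain, T₂ ⟨x, hx⟩ = 0} ⊆ (F : Set H₂))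
    (c : ℝ) (hc : 0 < c)
    (hineq : ∀ u ∈ F, ∀ v : T₂.adjoint.domain,
      (∀ w : T₂.adjoint.domain, T₂.adjoint w = 0 → (inner ℂ (v : H₃) (w : H₃) : ℂ) = 0) →
      c * ‖u‖ ≤ ‖ContinuousLinearMap.adjoint T₁ u + T₂.adjoint v‖) :
    (∀ u ∈ F, ∃ h : H₁, ∃ hh : h ∈ T₂.domain,
        T₂ ⟨h, hh⟩ = 0 ∧ T₁ h = u ∧ ‖h‖ ≤ c⁻¹ * ‖u‖) ∧
      T₁ '' {x : H₁ | ∃ hx : x ∈ T₂.domain, T₂ ⟨x, hx⟩ = 0} = (F : Set H₂) := by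
  have : CompleteSpace F := hF.completeSpace_coe
  set K := (LinearMap.range T₂.adjoint.toFun)ᗮ
  have hK : K ≤ T₂.ker := LinearPMap.orthogonal_range_adjoint_le_ker hdense hclosed
  have hT₁K : ∀ h : K, T₁ h ∈ F := fun h => hker ⟨h, LinearPMap.mem_ker.mp (hK h.2), rfl⟩
  let B : K →L[ℂ] F := F.orthogonalProjectionOnto ∘L T₁ ∘L K.subtypeL
  have hB : ∀ h : K, (B h : H₂) = T₁ h := fun h =>
    congrArg Subtype.val (F.orthogonalProjectionOnto_mem_subspace_eq_self ⟨_, hT₁K h⟩)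
  have hB_adjoint : ∀ u : F, c * ‖u‖ ≤ ‖(B†) u‖ := by
    intro u
    rw [← Submodule.norm_coe ((B†) u), ContinuousLinearMap.coe_adjoint_compression_apply]
    refine (LinearMap.range T₂.adjoint.toFun).le_norm_starProjection_orthogonal ?_
    rintro _ ⟨v, rfl⟩
    obtain ⟨v₀, hv₀, hT₂v₀⟩ := LinearPMap.exists_orthogonal_ker_adjoint_apply_eq hdense v
    simpa [hT₂v₀] using hineq u u.2 v₀ hv₀
  have hsolve : ∀ u ∈ F, ∃ h : H₁, ∃ hh : h ∈ T₂.domain,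
      T₂ ⟨h, hh⟩ = 0 ∧ T₁ h = u ∧ ‖h‖ ≤ c⁻¹ * ‖u‖ := by
    intro u hu
    obtain ⟨h, hBh, hnorm⟩ := B.exists_preimage_norm_le_of_le_norm_adjoint hc hB_adjoint ⟨u, hu⟩
    obtain ⟨hdom, hzero⟩ := LinearPMap.mem_ker.mp (hK h.2)
    exact ⟨h, hdom, hzero, by rw [← hB, hBh], hnorm⟩
  refine ⟨hsolve, hker.antisymm fun u hu => ?_⟩
  obtain ⟨h, hh, hzero, rfl, -⟩ := hsolve u hu
  exact ⟨h, ⟨hh, hzero⟩, rfl⟩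
end
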